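/- arXiv:2507.16603 — 3 statements merged into one kernel-verified Lean document; each statement's English description precedes it below -/
import Mathlib

section
/- Let τ be the honest random time on [s,t] associated with the continuous nonnegative intensity λ and driven by an Exp(1) random variable Y. Then for every r ∈ [s,t], P(τ ≤ r) = exp(-∫_r^t λ(u) du). -/
/-!
On `[s,t]` the tail integral `x ↦ ∫_x^t λ` is continuous, nonincreasing and vanishes at
`t`, so its sublevel set at height `y ≥ 0` is a closed interval `[τ, t]`. Hence `τ ≤ r`
exactly when `Y ≥ ∫_r^t λ` (or `Y < 0`, a null event), and the exponential tail gives
`P(Y ≥ c) = e^{-c}`.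
-/

open MeasureTheory ProbabilityTheory Real

/-- The honest random time on `[s,t]` associated with the intensity `lam`,
driven by the value `y`: `max (s, inf {r ∈ [s,t] : ∫_r^t lam ≤ y})`. -/
noncomputable def honestTime (s t : ℝ) (lam : ℝ → ℝ) (y : ℝ) : ℝ :=
  max s (sInf {r | r ∈ Set.Icc s t ∧ ∫ u in r..t, lam u ≤ y})

open Set

theorem csInf_sublevelSet_le_iff {α β : Type*} [ConditionallyCompleteLinearOrder α]
    [TopologicalSpace α] [OrderTopology α] [LinearOrder β] [TopologicalSpace β]
    [OrderClosedTopology β] {F : α → β} {s t r : α} {y : β}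
    (hF : ContinuousOn F (Icc s t)) (hanti : AntitoneOn F (Icc s t))
    (hne : {x ∈ Icc s t | F x ≤ y}.Nonempty) (hr : r ∈ Icc s t) :
    sInf {x ∈ Icc s t | F x ≤ y} ≤ r ↔ F r ≤ y := by
  have hbdd : BddBelow {x ∈ Icc s t | F x ≤ y} := ⟨s, fun x hx => hx.1.1⟩
  have hmem : sInf {x ∈ Icc s t | F x ≤ y} ∈ {x ∈ Icc s t | F x ≤ y} :=
    (hF.preimage_isClosed_of_isClosed isClosed_Icc isClosed_Iic).csInf_mem hne hbdd
  exact ⟨fun h => (hanti hmem.1 hr h).trans hmem.2, fun h => csInf_le hbdd ⟨hr, h⟩⟩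

section IntegralToRight

variable {s t : ℝ} {lam : ℝ → ℝ}

theorem integral_to_right_nonneg (hlam : ∀ u ∈ Icc s t, 0 ≤ lam u) {x : ℝ}
    (hx : x ∈ Icc s t) : 0 ≤ ∫ u in x..t, lam u :=
  intervalIntegral.integral_nonneg hx.2 fun u hu => hlam u ⟨hx.1.trans hu.1, hu.2⟩

theorem antitoneOn_integral_to_right (hint : IntegrableOn lam (Icc s t))
    (hlam : ∀ u ∈ Icc s t, 0 ≤ lam u) :
    AntitoneOn (fun x => ∫ u in x..t, lam u) (Icc s t) := by
  intro x hx y hy hxy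
  refine intervalIntegral.integral_mono_interval hxy hy.2 le_rfl ?_ ?_
  · exact (ae_restrict_mem measurableSet_Ioc).mono fun u hu =>
      hlam u ⟨hx.1.trans hu.1.le, hu.2⟩
  · exact (hint.mono_set (uIcc_subset_Icc hx (right_mem_Icc.2 (hx.1.trans hx.2))))
      |>.intervalIntegrable

end IntegralToRight

theorem expMeasure_Iio_zero {rate : ℝ} (hrate : 0 < rate) : expMeasure rate (Iio 0) = 0 := by
  have := isProbabilityMeasure_expMeasure hrate
  refine measure_mono_null Iio_subset_Iic_self ?_
  rw [← ofReal_cdf, cdf_expMeasure_eq hrate]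
  simp

theorem expMeasure_Ici {rate c : ℝ} (hrate : 0 < rate) (hc : 0 ≤ c) :
    expMeasure rate (Ici c) = ENNReal.ofReal (exp (-(rate * c))) := by
  have := isProbabilityMeasure_expMeasure hrate
  have hexp_le : exp (-(rate * c)) ≤ 1 := exp_le_one_iff.2 (neg_nonpos.2 (mul_nonneg hrate.le hc))
  have hIoi : expMeasure rate (Ici c) = expMeasure rate (Ioi c) :=
    measure_congr ((withDensity_absolutelyContinuous volume _).ae_eq Ioi_ae_eq_Ici).symm
  rw [hIoi, ← compl_Iic, prob_compl_eq_one_sub measurableSet_Iic, ← ofReal_cdf,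
    cdf_expMeasure_eq hrate, if_pos hc, ← ENNReal.ofReal_one,
    ← ENNReal.ofReal_sub _ (sub_nonneg.2 hexp_le)]
  ring_nf

theorem honestTime_le_iff {s t r : ℝ} {lam : ℝ → ℝ} (hs : 0 ≤ s)
    (hint : IntegrableOn lam (Icc s t)) (hlam : ∀ u ∈ Icc s t, 0 ≤ lam u)
    (hr : r ∈ Icc s t) (y : ℝ) :
    honestTime s t lam y ≤ r ↔ y < 0 ∨ ∫ u in r..t, lam u ≤ y := by
  rcases lt_or_ge y 0 with hy | hy
  · have hempty : {x ∈ Icc s t | ∫ u in x..t, lam u ≤ y} = ∅ :=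
      eq_empty_of_forall_notMem fun x hx =>
        (hy.trans_le (integral_to_right_nonneg hlam hx.1)).not_ge hx.2
    rw [honestTime, hempty, Real.sInf_empty, max_eq_left hs]
    exact iff_of_true hr.1 (Or.inl hy)
  · have hst : s ≤ t := hr.1.trans hr.2
    have hcont : ContinuousOn (fun x => ∫ u in x..t, lam u) (Icc s t) := by
      rw [← uIcc_of_le hst] at hint ⊢
      exact intervalIntegral.continuousOn_primitive_interval_left hint
    have hne : {x ∈ Icc s t | ∫ u in x..t, lam u ≤ y}.Nonempty :=
      ⟨t, right_mem_Icc.2 hst, by simpa using hy⟩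
    rw [honestTime, max_eq_right (le_csInf hne fun x hx => hx.1.1),
      csInf_sublevelSet_le_iff hcont (antitoneOn_integral_to_right hint hlam) hne hr]
    exact ⟨Or.inr, fun h => h.resolve_left hy.not_gt⟩

theorem honestTime_cdf_general
    {Ω : Type*} [MeasurableSpace Ω] (P : Measure Ω)
    (s t : ℝ) (hs : 0 ≤ s)
    (lam : ℝ → ℝ) (hlam : Continuous lam)
    (hlam_nonneg : ∀ u ∈ Set.Icc s t, 0 ≤ lam u)
    (Y : Ω → ℝ) (hY : Measurable Y) (hYlaw : P.map Y = expMeasure 1)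
    (r : ℝ) (hr : r ∈ Set.Icc s t) :
    P {ω | honestTime s t lam (Y ω) ≤ r}
      = ENNReal.ofReal (Real.exp (-(∫ u in r..t, lam u))) := by
  set c := ∫ u in r..t, lam u
  have hevent : {ω | honestTime s t lam (Y ω) ≤ r} = Y ⁻¹' (Iio 0 ∪ Ici c) := by
    ext ω
    exact honestTime_le_iff hs hlam.integrableOn_Icc hlam_nonneg hr (Y ω)
  rw [hevent, ← Measure.map_apply hY (measurableSet_Iio.union measurableSet_Ici), hYlaw,
    measure_congr (union_ae_eq_right_of_ae_eq_empty (ae_eq_empty.2 (expMeasure_Iio_zero one_pos))),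
    expMeasure_Ici one_pos (integral_to_right_nonneg hlam_nonneg hr), one_mul]

/-- For the honest random time `τ` on `[s,t]` driven by an `Exp(1)` random variable,
`P(τ ≤ r) = exp (-∫_r^t λ(u) du)` for every `r ∈ [s,t]`. -/
theorem honestTime_cdf
    {Ω : Type*} [MeasurableSpace Ω] (P : Measure Ω) [IsProbabilityMeasure P]
    (s t : ℝ) (hs : 0 ≤ s) (hst : s < t)
    (lam : ℝ → ℝ) (hlam : Continuous lam)
    (hlam_nonneg : ∀ u ∈ Set.Icc s t, 0 ≤ lam u)
    (Y : Ω → ℝ) (hY : Measurable Y) (hYlaw : P.map Y = expMeasure 1)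
    (r : ℝ) (hr : r ∈ Set.Icc s t) :
    P {ω | honestTime s t lam (Y ω) ≤ r}
      = ENNReal.ofReal (Real.exp (-(∫ u in r..t, lam u))) :=
  honestTime_cdf_general P s t hs lam hlam hlam_nonneg Y hY hYlaw r hr
end

section
/- (Theorem 1, unbiasedness.) Let τ¹ be the honest random time on [s,t] associated with the intensity λ1 and driven by an Exp(1) random variable Y. Then E[exp(-∫_{τ¹}^t λ0(u) du)] = 1 - P01(s,t) = P00(s,t); equivalently, the conditional transition probability P00^{τ¹}(s,t) := exp(-∫_{τ¹}^t λ0(u) du) is an unbiased estimator of P00(s,t). -/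
open MeasureTheory ProbabilityTheory Real

/-!
Write `Lᵢ(v) = ∫_v^t λᵢ`. Since `λ₁ ≥ 0`, the honest time satisfies `τ¹ ≤ v ↔ L₁(v) ≤ Y` on
`[s,t]`, and `v ↦ e^{-L₀(v)}` is a primitive of `e^{-L₀(v)} λ₀(v)`, so
`e^{-L₀(τ¹)} = 1 - ∫_s^t 1{L₁(v) ≤ Y} e^{-L₀(v)} λ₀(v) dv`.
Taking expectations and exchanging the integrals (Fubini), `P(Y ≥ L₁(v)) = e^{-L₁(v)}` turns the
integrand into `e^{-(L₀+L₁)(v)} λ₀(v)`.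
-/

open Set

section PrimitiveFromRight

variable {f : ℝ → ℝ} (t : ℝ)

theorem hasDerivAt_intervalIntegral_left (hf : Continuous f) (v : ℝ) :
    HasDerivAt (fun v => ∫ u in v..t, f u) (-f v) v :=
  intervalIntegral.integral_hasDerivAt_left (hf.intervalIntegrable _ _)
    hf.stronglyMeasurable.stronglyMeasurableAtFilter hf.continuousAt

theorem continuous_intervalIntegral_left (hf : Continuous f) :
    Continuous fun v => ∫ u in v..t, f u :=
  continuous_iff_continuousAt.2 fun v => (hasDerivAt_intervalIntegral_left t hf v).continuousAt

theorem integral_exp_neg_integral_mul (hf : Continuous f) (a : ℝ) :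
    ∫ v in a..t, exp (-∫ u in v..t, f u) * f v = 1 - exp (-∫ u in a..t, f u) := by
  have hderiv : ∀ v ∈ uIcc a t,
      HasDerivAt (fun v => exp (-∫ u in v..t, f u)) (exp (-∫ u in v..t, f u) * f v) v :=
    fun v _ => by simpa using (hasDerivAt_intervalIntegral_left t hf v).neg.exp
  have hcont : Continuous fun v => exp (-∫ u in v..t, f u) * f v :=
    (continuous_intervalIntegral_left t hf).neg.rexp.mul hf
  rw [intervalIntegral.integral_eq_sub_of_hasDerivAt hderiv (hcont.intervalIntegrable _ _)]
  simp

end PrimitiveFromRight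

section HonestTime

variable {s t : ℝ} {lam : ℝ → ℝ} {y : ℝ}

theorem isLeast_honestTime (hst : s ≤ t) (hlam : Continuous lam) (hy : 0 ≤ y) :
    IsLeast {r | r ∈ Icc s t ∧ ∫ u in r..t, lam u ≤ y} (honestTime s t lam y) := by
  set S := {r | r ∈ Icc s t ∧ ∫ u in r..t, lam u ≤ y}
  have hclosed : IsClosed S :=
    isClosed_Icc.inter (isClosed_le (continuous_intervalIntegral_left t hlam) continuous_const)
  have hleast := hclosed.isLeast_csInf ⟨t, ⟨hst, le_rfl⟩, by simpa using hy⟩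
    ⟨s, fun r hr => hr.1.1⟩
  rwa [honestTime, max_eq_right hleast.1.1.1]

theorem honestTime_le_iff_s3 (hst : s ≤ t) (hlam : Continuous lam)
    (hnn : ∀ u ∈ Icc s t, 0 ≤ lam u) (hy : 0 ≤ y) {v : ℝ} (hv : v ∈ Icc s t) :
    honestTime s t lam y ≤ v ↔ ∫ u in v..t, lam u ≤ y := by
  obtain ⟨⟨hτ, hτy⟩, hlow⟩ := isLeast_honestTime hst hlam hy
  refine ⟨fun hτv => ?_, fun hvy => hlow ⟨hv, hvy⟩⟩
  have hsplit := intervalIntegral.integral_add_adjacent_intervals (μ := volume)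
    (hlam.intervalIntegrable (honestTime s t lam y) v) (hlam.intervalIntegrable v t)
  have hhead : 0 ≤ ∫ u in honestTime s t lam y..v, lam u :=
    intervalIntegral.integral_nonneg hτv fun u hu => hnn u ⟨hτ.1.trans hu.1, hu.2.trans hv.2⟩
  linarith

theorem setOf_integral_le_inter_Ioc_ae_eq (hst : s ≤ t) (hlam : Continuous lam)
    (hnn : ∀ u ∈ Icc s t, 0 ≤ lam u) (hy : 0 ≤ y) :
    ({v | ∫ u in v..t, lam u ≤ y} ∩ Ioc s t : Set ℝ) =ᵐ[volume] Ioc (honestTime s t lam y) t := by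
  have hsτ := (isLeast_honestTime hst hlam hy).1.1.1
  have hleft :
      {v | ∫ u in v..t, lam u ≤ y} ∩ Ioc s t = Ici (honestTime s t lam y) ∩ Ioc s t := by
    ext v
    simp only [mem_inter_iff, mem_ofPred_eq, mem_Ici, and_congr_left_iff]
    exact fun hv => (honestTime_le_iff_s3 hst hlam hnn hy (Ioc_subset_Icc_self hv)).symm
  have hright : Ioc (honestTime s t lam y) t = Ioi (honestTime s t lam y) ∩ Ioc s t := by
    ext v
    simp only [mem_Ioc, mem_inter_iff, mem_Ioi]
    constructor
    · exact fun ⟨hτv, hvt⟩ => ⟨hτv, hsτ.trans_lt hτv, hvt⟩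
    · exact fun ⟨hτv, _, hvt⟩ => ⟨hτv, hvt⟩
  rw [hleft, hright]
  exact (Ioi_ae_eq_Ici (μ := volume)).symm.inter (ae_eq_refl _)

theorem setIntegral_indicator_eq_intervalIntegral_honestTime (hst : s ≤ t)
    (hlam : Continuous lam) (hnn : ∀ u ∈ Icc s t, 0 ≤ lam u) (hy : 0 ≤ y) (g : ℝ → ℝ) :
    ∫ v in Ioc s t, {v | ∫ u in v..t, lam u ≤ y}.indicator g v
      = ∫ v in honestTime s t lam y..t, g v := by
  have hmeas : MeasurableSet {v | ∫ u in v..t, lam u ≤ y} :=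
    measurableSet_le (continuous_intervalIntegral_left t hlam).measurable measurable_const
  rw [integral_indicator hmeas, Measure.restrict_restrict hmeas,
    setIntegral_congr_set (setOf_integral_le_inter_Ioc_ae_eq hst hlam hnn hy),
    intervalIntegral.integral_of_le (isLeast_honestTime hst hlam hy).1.1.2]

end HonestTime

section Fubini

variable {Ω α : Type*} [MeasurableSpace Ω] [MeasurableSpace α]
  (P : Measure Ω) [IsFiniteMeasure P] {ν : Measure α} [SFinite ν] {Y : Ω → ℝ} {L g : α → ℝ}

theorem integrable_prod_indicator_le (hY : Measurable Y) (hL : Measurable L)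
    (hg : Integrable g ν) :
    Integrable (fun p : Ω × α => {v | L v ≤ Y p.1}.indicator g p.2) (P.prod ν) :=
  (hg.comp_snd P).indicator (measurableSet_le (hL.comp measurable_snd) (hY.comp measurable_fst))

theorem integrable_integral_indicator_le (hY : Measurable Y) (hL : Measurable L)
    (hg : Integrable g ν) :
    Integrable (fun ω => ∫ v, {v | L v ≤ Y ω}.indicator g v ∂ν) P :=
  (integrable_prod_indicator_le P hY hL hg).integral_prod_left

theorem integral_integral_indicator_le (hY : Measurable Y) (hL : Measurable L)
    (hg : Integrable g ν) :
    ∫ ω, ∫ v, {v | L v ≤ Y ω}.indicator g v ∂ν ∂P = ∫ v, P.real (Y ⁻¹' Ici (L v)) * g v ∂ν := by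
  rw [integral_integral_swap (integrable_prod_indicator_le P hY hL hg)]
  congr with v
  have hind :
      (fun ω => {v | L v ≤ Y ω}.indicator g v) = (Y ⁻¹' Ici (L v)).indicator fun _ => g v :=
    rfl
  rw [hind, integral_indicator_const _ (hY measurableSet_Ici), smul_eq_mul]

end Fubini

section Exponential

variable {r : ℝ}

theorem ae_nonneg_expMeasure : ∀ᵐ y ∂expMeasure r, 0 ≤ y := by
  rw [ae_iff]
  simp only [not_le]
  change expMeasure r (Iio 0) = 0
  rw [expMeasure, gammaMeasure, withDensity_apply _ measurableSet_Iio]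
  exact lintegral_exponentialPDF_of_nonpos le_rfl

theorem expMeasure_real_Ici (hr : 0 < r) {a : ℝ} (ha : 0 ≤ a) :
    (expMeasure r).real (Ici a) = exp (-(r * a)) := by
  have := isProbabilityMeasure_expMeasure hr
  have hatom : expMeasure r {a} = 0 := withDensity_absolutelyContinuous _ _ (volume_singleton)
  rw [← compl_Iio, probReal_compl_eq_one_sub measurableSet_Iio,
    measureReal_congr (Iio_ae_eq_Iic' hatom), ← cdf_eq_real, cdf_expMeasure_eq hr, if_pos ha,
    sub_sub_cancel]

end Exponential

theorem unbiased_P00_general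
    {Ω : Type*} [MeasurableSpace Ω] (P : Measure Ω) [IsProbabilityMeasure P]
    (s t : ℝ) (hst : s < t)
    (lam0 lam1 : ℝ → ℝ) (hlam0 : Continuous lam0) (hlam1 : Continuous lam1)
    (hlam1_nonneg : ∀ u ∈ Set.Icc s t, 0 ≤ lam1 u)
    (Y : Ω → ℝ) (hY : Measurable Y) (hYlaw : P.map Y = expMeasure 1) :
    (∫ ω, Real.exp (-(∫ u in (honestTime s t lam1 (Y ω))..t, lam0 u)) ∂P)
      = 1 - ∫ v in s..t,
          Real.exp (-(∫ r in v..t, (lam0 r + lam1 r))) * lam0 v := by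
  set g : ℝ → ℝ := fun v => exp (-∫ u in v..t, lam0 u) * lam0 v
  have hL1 := (continuous_intervalIntegral_left t hlam1).measurable
  have hg : IntegrableOn g (Ioc s t) :=
    ((continuous_intervalIntegral_left t hlam0).neg.rexp.mul hlam0).integrableOn_Ioc
  have hY0 : ∀ᵐ ω ∂P, 0 ≤ Y ω := ae_of_ae_map hY.aemeasurable (hYlaw ▸ ae_nonneg_expMeasure)
  have hpointwise : ∀ᵐ ω ∂P, exp (-∫ u in honestTime s t lam1 (Y ω)..t, lam0 u)
      = 1 - ∫ v in Ioc s t, {v | ∫ u in v..t, lam1 u ≤ Y ω}.indicator g v := by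
    filter_upwards [hY0] with ω hω
    rw [setIntegral_indicator_eq_intervalIntegral_honestTime hst.le hlam1 hlam1_nonneg hω,
      integral_exp_neg_integral_mul t hlam0]
    ring
  rw [integral_congr_ae hpointwise, integral_sub (integrable_const 1)
      (integrable_integral_indicator_le P hY hL1 hg), integral_const, probReal_univ, one_smul,
    integral_integral_indicator_le P hY hL1 hg, intervalIntegral.integral_of_le hst.le]
  congr 1
  refine setIntegral_congr_fun measurableSet_Ioc fun v hv => ?_
  have hL1v : 0 ≤ ∫ u in v..t, lam1 u := intervalIntegral.integral_nonneg hv.2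
    fun u hu => hlam1_nonneg u ⟨hv.1.le.trans hu.1, hu.2⟩
  rw [← map_measureReal_apply hY measurableSet_Ici, hYlaw, expMeasure_real_Ici one_pos hL1v,
    one_mul, intervalIntegral.integral_add (hlam0.intervalIntegrable _ _)
      (hlam1.intervalIntegrable _ _),
    neg_add, exp_add]
  simp only [g]
  ring

/-- Theorem 1 (unbiasedness): with `τ¹` the honest time on `[s,t]` associated with `λ₁`,
driven by an `Exp(1)` random variable, the conditional transition probability
`P₀₀^{τ¹}(s,t) = exp (-∫_{τ¹}^t λ₀(u) du)` is an unbiased estimator of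
`P₀₀(s,t) = 1 - P₀₁(s,t) = 1 - ∫_s^t exp (-∫_v^t (λ₀+λ₁)(r) dr) λ₀(v) dv`. -/
theorem unbiased_P00
    {Ω : Type*} [MeasurableSpace Ω] (P : Measure Ω) [IsProbabilityMeasure P]
    (s t : ℝ) (hs : 0 ≤ s) (hst : s < t)
    (lam0 lam1 : ℝ → ℝ) (hlam0 : Continuous lam0) (hlam1 : Continuous lam1)
    (hlam0_nonneg : ∀ u ∈ Set.Icc s t, 0 ≤ lam0 u)
    (hlam1_nonneg : ∀ u ∈ Set.Icc s t, 0 ≤ lam1 u)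
    (Y : Ω → ℝ) (hY : Measurable Y) (hYlaw : P.map Y = expMeasure 1) :
    (∫ ω, Real.exp (-(∫ u in (honestTime s t lam1 (Y ω))..t, lam0 u)) ∂P)
      = 1 - ∫ v in s..t,
          Real.exp (-(∫ r in v..t, (lam0 r + lam1 r))) * lam0 v :=
  unbiased_P00_general P s t hst lam0 lam1 hlam0 hlam1 hlam1_nonneg Y hY hYlaw
end

section
/- (Solution of the Kolmogorov forward equations.) Suppose λ0, λ1 : ℝ → ℝ are continuous and nonnegative on [s,∞). Then the functions g(u) := P01(s,u) and h(u) := P10(s,u) satisfy, for every u > s, the derivative identities g'(u) = (1 - g(u))·λ0(u) - g(u)·λ1(u) and h'(u) = (1 - h(u))·λ1(u) - h(u)·λ0(u), together with the initial conditions g(s) = h(s) = 0. -/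
/-!
With `Λ u = ∫_s^u (λ₀ + λ₁)`, the integrand factors as `exp (-Λ u) · exp (Λ v) λ(v)`, so
`P(s,u) = exp (-Λ u) ∫_s^u exp (Λ v) λ(v) dv`. The product rule and the fundamental theorem of
calculus give `P' = λ - (λ₀ + λ₁) P`, which is the forward equation rearranged.
-/

open Real

variable {f c : ℝ → ℝ}

theorem integral_exp_neg_integral_mul_eq (hf : Continuous f) (s u : ℝ) :
    ∫ v in s..u, exp (-∫ r in v..u, f r) * c v
      = exp (-∫ r in s..u, f r) * ∫ v in s..u, exp (∫ r in s..v, f r) * c v := by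
  rw [← intervalIntegral.integral_const_mul]
  refine intervalIntegral.integral_congr fun v _ => ?_
  have hsplit : ∫ r in v..u, f r = (∫ r in s..u, f r) - ∫ r in s..v, f r :=
    (intervalIntegral.integral_interval_sub_left (hf.intervalIntegrable s u)
      (hf.intervalIntegrable s v)).symm
  simp only [hsplit, neg_sub, exp_sub, exp_neg]
  field_simp

theorem hasDerivAt_integral_exp_neg_integral_mul (hf : Continuous f) (hc : Continuous c)
    (s u : ℝ) :
    HasDerivAt (fun x => ∫ v in s..x, exp (-∫ r in v..x, f r) * c v)
      (c u - (∫ v in s..u, exp (-∫ r in v..u, f r) * c v) * f u) u := by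
  set Λ : ℝ → ℝ := fun x => ∫ r in s..x, f r
  set F : ℝ → ℝ := fun x => ∫ v in s..x, exp (Λ v) * c v
  have hΛ : ∀ x, HasDerivAt Λ (f x) x := fun x =>
    hf.integral_hasStrictDerivAt s x |>.hasDerivAt
  have hΛc : Continuous Λ := continuous_iff_continuousAt.2 fun x => (hΛ x).continuousAt
  have hF : HasDerivAt F (exp (Λ u) * c u) u :=
    ((hΛc.rexp.mul hc).integral_hasStrictDerivAt s u).hasDerivAt
  have hE : HasDerivAt (fun x => exp (-Λ x)) (exp (-Λ u) * -f u) u := (hΛ u).neg.exp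
  rw [funext (integral_exp_neg_integral_mul_eq hf s)]
  refine (hE.fun_mul hF).congr_deriv ?_
  have hcancel : exp (-Λ u) * exp (Λ u) = 1 := by rw [← exp_add, neg_add_cancel, exp_zero]
  rw [integral_exp_neg_integral_mul_eq hf]
  linear_combination c u * hcancel

theorem kolmogorov_forward_solution_general
    (s : ℝ)
    (lam0 lam1 : ℝ → ℝ) (hlam0 : Continuous lam0) (hlam1 : Continuous lam1)
    (g h : ℝ → ℝ)
    (hg : g = fun u => ∫ v in s..u, Real.exp (-(∫ r in v..u, (lam0 r + lam1 r))) * lam0 v)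
    (hh : h = fun u => ∫ v in s..u, Real.exp (-(∫ r in v..u, (lam0 r + lam1 r))) * lam1 v) :
    (∀ u, s < u → HasDerivAt g ((1 - g u) * lam0 u - g u * lam1 u) u)
    ∧ (∀ u, s < u → HasDerivAt h ((1 - h u) * lam1 u - h u * lam0 u) u)
    ∧ g s = 0 ∧ h s = 0 := by
  have hsum : Continuous fun r => lam0 r + lam1 r := hlam0.add hlam1
  subst hg hh
  refine ⟨fun u _ => ?_, fun u _ => ?_, by simp, by simp⟩
  · convert hasDerivAt_integral_exp_neg_integral_mul hsum hlam0 s u using 1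
    ring
  · convert hasDerivAt_integral_exp_neg_integral_mul hsum hlam1 s u using 1
    ring

/-- Solution of the Kolmogorov forward equations: if `λ₀, λ₁` are continuous and
nonnegative on `[s,∞)`, then `g(u) := P₀₁(s,u) = ∫_s^u exp (-∫_v^u (λ₀+λ₁)(r) dr) λ₀(v) dv`
and `h(u) := P₁₀(s,u) = ∫_s^u exp (-∫_v^u (λ₀+λ₁)(r) dr) λ₁(v) dv` satisfy, for `u > s`,
`g'(u) = (1 - g(u)) λ₀(u) - g(u) λ₁(u)` and `h'(u) = (1 - h(u)) λ₁(u) - h(u) λ₀(u)`,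
with `g(s) = h(s) = 0`. -/
theorem kolmogorov_forward_solution
    (s : ℝ) (hs : 0 ≤ s)
    (lam0 lam1 : ℝ → ℝ) (hlam0 : Continuous lam0) (hlam1 : Continuous lam1)
    (hlam0_nonneg : ∀ u, s ≤ u → 0 ≤ lam0 u)
    (hlam1_nonneg : ∀ u, s ≤ u → 0 ≤ lam1 u)
    (g h : ℝ → ℝ)
    (hg : g = fun u => ∫ v in s..u, Real.exp (-(∫ r in v..u, (lam0 r + lam1 r))) * lam0 v)
    (hh : h = fun u => ∫ v in s..u, Real.exp (-(∫ r in v..u, (lam0 r + lam1 r))) * lam1 v) :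
    (∀ u, s < u → HasDerivAt g ((1 - g u) * lam0 u - g u * lam1 u) u)
    ∧ (∀ u, s < u → HasDerivAt h ((1 - h u) * lam1 u - h u * lam0 u) u)
    ∧ g s = 0 ∧ h s = 0 :=
  kolmogorov_forward_solution_general s lam0 lam1 hlam0 hlam1 g h hg hh
end
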